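/- arXiv:1503.07029 — 3 statements merged into one kernel-verified Lean document; each statement's English description precedes it below -/
import Mathlib

section
/- Let X ~ Bin(t,p) and Y ~ Bin(n−t−1,p) be independent, with t ≤ n/8, np ≥ 1. Then P(X ≥ max(Y,1)) ≤ 2·exp(−np/3). -/
/-- `P(Bin(m,p) = k)`. -/
noncomputable def binPMF (m k : ℕ) (p : ℝ) : ℝ :=
  (m.choose k : ℝ) * p ^ k * (1 - p) ^ (m - k)

/-- For independent `X ~ Bin(t,p)`, `Y ~ Bin(n−t−1,p)` with `t ≤ n/8` and
`np ≥ 1`: `P(X ≥ max(Y,1)) ≤ 2·exp(−np/3)`. -/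
theorem stmt_12 (n t : ℕ) (p : ℝ) (hp0 : 0 ≤ p) (hp1 : p ≤ 1)
    (ht : (t : ℝ) ≤ n / 8) (hnp : 1 ≤ (n : ℝ) * p) :
    (∑ x ∈ Finset.range (t + 1), ∑ y ∈ Finset.range (n - t - 1 + 1),
        (if max y 1 ≤ x then binPMF t x p * binPMF (n - t - 1) y p else 0)) ≤
      2 * Real.exp (-(n * p) / 3) := by
  have hq0 : (0:ℝ) ≤ 1 - p := by linarith
  have hpmf : ∀ (a b : ℕ), 0 ≤ binPMF a b p := by
    intro a b; unfold binPMF; positivity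
  set m := n - t - 1 with hm
  -- n ≥ t + 1 so that the cast of m works
  have hn1 : (1:ℝ) ≤ n := by nlinarith
  have htn' : (t:ℝ) + 1 ≤ n := by
    rcases Nat.eq_zero_or_pos t with h0 | h0
    · simp [h0]; exact_mod_cast hn1
    · have : (1:ℝ) ≤ t := by exact_mod_cast h0
      nlinarith
  have htn : t + 1 ≤ n := by exact_mod_cast htn'
  have hmcast : (m:ℝ) = (n:ℝ) - t - 1 := by
    rw [hm, show n - t - 1 = n - (t+1) from Nat.sub_sub n t 1, Nat.cast_sub htn]
    push_cast; ring
  -- Step 1: bound the indicator by (8/3)^x * (3/8)^y and factor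
  have step1 : (∑ x ∈ Finset.range (t + 1), ∑ y ∈ Finset.range (m + 1),
        (if max y 1 ≤ x then binPMF t x p * binPMF m y p else 0)) ≤
      (∑ x ∈ Finset.range (t + 1), (8/3:ℝ)^x * binPMF t x p) *
        (∑ y ∈ Finset.range (m + 1), (3/8:ℝ)^y * binPMF m y p) := by
    rw [Finset.sum_mul_sum]
    apply Finset.sum_le_sum
    intro x hx
    apply Finset.sum_le_sum
    intro y hy
    split_ifs with h
    · have hyx : y ≤ x := le_trans (le_max_left _ _) h
      have h1 : ((8:ℝ)/3)^y ≤ (8/3)^x := pow_le_pow_right₀ (by norm_num) hyx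
      have h2 : (1:ℝ) ≤ (8/3)^x * (3/8)^y := by
        have h3 : ((3:ℝ)/8)^y = ((8/3:ℝ)^y)⁻¹ := by
          rw [← inv_pow]; norm_num
        rw [h3, ← div_eq_mul_inv, le_div_iff₀ (by positivity)]
        simpa using h1
      have hnn : 0 ≤ binPMF t x p * binPMF m y p :=
        mul_nonneg (hpmf _ _) (hpmf _ _)
      calc binPMF t x p * binPMF m y p
          = 1 * (binPMF t x p * binPMF m y p) := by ring
        _ ≤ ((8/3:ℝ)^x * (3/8)^y) * (binPMF t x p * binPMF m y p) :=
            mul_le_mul_of_nonneg_right h2 hnn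
        _ = (8/3:ℝ)^x * binPMF t x p * ((3/8:ℝ)^y * binPMF m y p) := by ring
    · have : (0:ℝ) ≤ (8/3:ℝ)^x * binPMF t x p * ((3/8:ℝ)^y * binPMF m y p) := by
        have := hpmf t x
        have := hpmf m y
        positivity
      linarith
  -- Step 2: binomial theorem
  have step2a : (∑ x ∈ Finset.range (t + 1), (8/3:ℝ)^x * binPMF t x p)
      = ((8/3:ℝ)*p + (1-p))^t := by
    rw [add_pow]
    apply Finset.sum_congr rfl
    intro x hx
    unfold binPMF
    rw [mul_pow]
    ring
  have step2b : (∑ y ∈ Finset.range (m + 1), (3/8:ℝ)^y * binPMF m y p)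
      = ((3/8:ℝ)*p + (1-p))^m := by
    rw [add_pow]
    apply Finset.sum_congr rfl
    intro y hy
    unfold binPMF
    rw [mul_pow]
    ring
  -- Step 3: exponential bounds
  have base1 : (0:ℝ) ≤ (8/3:ℝ)*p + (1-p) := by linarith
  have base2 : (0:ℝ) ≤ (3/8:ℝ)*p + (1-p) := by linarith
  have step3 : ((8/3:ℝ)*p + (1-p))^t ≤ Real.exp ((t:ℝ) * ((5/3)*p)) := by
    have h2 : (8/3:ℝ)*p + (1-p) ≤ Real.exp ((5/3)*p) := by
      have := Real.add_one_le_exp ((5/3)*p)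
      linarith
    calc ((8/3:ℝ)*p + (1-p))^t ≤ (Real.exp ((5/3)*p))^t :=
          pow_le_pow_left₀ base1 h2 t
      _ = Real.exp ((t:ℝ) * ((5/3)*p)) := (Real.exp_nat_mul _ t).symm
  have step4 : ((3/8:ℝ)*p + (1-p))^m ≤ Real.exp ((m:ℝ) * (-(5/8)*p)) := by
    have h2 : (3/8:ℝ)*p + (1-p) ≤ Real.exp (-(5/8)*p) := by
      have := Real.add_one_le_exp (-(5/8)*p)
      linarith
    calc ((3/8:ℝ)*p + (1-p))^m ≤ (Real.exp (-(5/8)*p))^m :=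
          pow_le_pow_left₀ base2 h2 m
      _ = Real.exp ((m:ℝ) * (-(5/8)*p)) := (Real.exp_nat_mul _ m).symm
  -- Step 5: final arithmetic
  have step5 : Real.exp ((t:ℝ) * ((5/3)*p)) * Real.exp ((m:ℝ) * (-(5/8)*p))
      ≤ 2 * Real.exp (-(n * p) / 3) := by
    rw [← Real.exp_add, show (2:ℝ) * Real.exp (-(n*p)/3)
        = Real.exp (Real.log 2 + -(n*p)/3) by
      rw [Real.exp_add, Real.exp_log (by norm_num)]]
    apply Real.exp_le_exp.mpr
    have hlog : (0.6931471803:ℝ) < Real.log 2 := Real.log_two_gt_d9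
    have htp : (t:ℝ)*p ≤ (n:ℝ)*p/8 := by nlinarith
    rw [hmcast]
    nlinarith
  calc (∑ x ∈ Finset.range (t + 1), ∑ y ∈ Finset.range (m + 1),
        (if max y 1 ≤ x then binPMF t x p * binPMF m y p else 0))
      ≤ (∑ x ∈ Finset.range (t + 1), (8/3:ℝ)^x * binPMF t x p) *
        (∑ y ∈ Finset.range (m + 1), (3/8:ℝ)^y * binPMF m y p) := step1
    _ = ((8/3:ℝ)*p + (1-p))^t * ((3/8:ℝ)*p + (1-p))^m := by rw [step2a, step2b]
    _ ≤ Real.exp ((t:ℝ) * ((5/3)*p)) * Real.exp ((m:ℝ) * (-(5/8)*p)) := by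
        apply mul_le_mul step3 step4 (pow_nonneg base2 m) (Real.exp_nonneg _)
    _ ≤ 2 * Real.exp (-(n * p) / 3) := step5
end

section
/- Fix 0 < x < 1/2 and p ∈ (0,1], and set t = ⌊xn⌋. Let X ~ Bin(t,p) and Y ~ Bin(n−t−1,p) be independent. Then P(X ≥ Y) ≤ exp(−(1/2)·((n/2 − t)²/n)·p) + exp(−(1/3)·((n/2 − t)²/n)·p) for all sufficiently large n. -/
lemma binPMF_nonneg {m k : ℕ} {p : ℝ} (h0 : 0 ≤ p) (h1 : p ≤ 1) :
    0 ≤ binPMF m k p := by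
  unfold binPMF
  have : (0:ℝ) ≤ 1 - p := by linarith
  positivity

lemma binPMF_exp_sum (m : ℕ) (p r : ℝ) :
    ∑ k ∈ Finset.range (m+1), Real.exp (r * k) * binPMF m k p
      = (p * Real.exp r + (1 - p)) ^ m := by
  rw [add_pow]
  apply Finset.sum_congr rfl
  intro k hk
  rw [mul_pow, ← Real.exp_nat_mul]
  unfold binPMF
  ring_nf

lemma binPMF_sum (m : ℕ) (p : ℝ) : ∑ k ∈ Finset.range (m+1), binPMF m k p = 1 := by
  have h := binPMF_exp_sum m p 0
  simp [Real.exp_zero] at h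
  convert h using 2 with k hk

lemma chernoff_upper (t : ℕ) (p s c : ℝ) (hp0 : 0 ≤ p) (hp1 : p ≤ 1) (hs : 0 ≤ s) :
    ∑ a ∈ Finset.range (t+1), (if c ≤ (a:ℝ) then binPMF t a p else 0)
      ≤ Real.exp (t * p * (Real.exp s - 1) - s * c) := by
  have h1 : ∑ a ∈ Finset.range (t+1), (if c ≤ (a:ℝ) then binPMF t a p else 0)
      ≤ ∑ a ∈ Finset.range (t+1), Real.exp (-(s*c)) * (Real.exp (s * a) * binPMF t a p) := by
    apply Finset.sum_le_sum
    intro a _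
    have hnn := binPMF_nonneg (m := t) (k := a) hp0 hp1
    by_cases hca : c ≤ (a:ℝ)
    · rw [if_pos hca, ← mul_assoc, ← Real.exp_add]
      have : (1:ℝ) ≤ Real.exp (-(s*c) + s*a) := by
        apply Real.one_le_exp
        nlinarith
      nlinarith [this, hnn]
    · rw [if_neg hca]
      positivity
  rw [← Finset.mul_sum, binPMF_exp_sum] at h1
  refine h1.trans ?_
  have hb : (0:ℝ) ≤ p * Real.exp s + (1 - p) := by
    nlinarith [Real.exp_pos s]
  have hb2 : p * Real.exp s + (1 - p) ≤ Real.exp (p * (Real.exp s - 1)) := by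
    have := Real.add_one_le_exp (p * (Real.exp s - 1))
    linarith
  calc Real.exp (-(s*c)) * (p * Real.exp s + (1 - p)) ^ t
      ≤ Real.exp (-(s*c)) * Real.exp (p * (Real.exp s - 1)) ^ t := by
        apply mul_le_mul_of_nonneg_left _ (Real.exp_pos _).le
        exact pow_le_pow_left₀ hb hb2 t
    _ = Real.exp (t * p * (Real.exp s - 1) - s * c) := by
        rw [← Real.exp_nat_mul, ← Real.exp_add]
        ring_nf

lemma chernoff_lower (m : ℕ) (p s c : ℝ) (hp0 : 0 ≤ p) (hp1 : p ≤ 1) (hs : 0 ≤ s) :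
    ∑ b ∈ Finset.range (m+1), (if (b:ℝ) ≤ c then binPMF m b p else 0)
      ≤ Real.exp (m * p * (Real.exp (-s) - 1) + s * c) := by
  have h1 : ∑ b ∈ Finset.range (m+1), (if (b:ℝ) ≤ c then binPMF m b p else 0)
      ≤ ∑ b ∈ Finset.range (m+1), Real.exp (s*c) * (Real.exp ((-s) * b) * binPMF m b p) := by
    apply Finset.sum_le_sum
    intro b _
    have hnn := binPMF_nonneg (m := m) (k := b) hp0 hp1
    by_cases hbc : (b:ℝ) ≤ c
    · rw [if_pos hbc, ← mul_assoc, ← Real.exp_add]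
      have : (1:ℝ) ≤ Real.exp (s*c + (-s)*b) := by
        apply Real.one_le_exp
        nlinarith
      nlinarith [this, hnn]
    · rw [if_neg hbc]
      positivity
  rw [← Finset.mul_sum, binPMF_exp_sum] at h1
  refine h1.trans ?_
  have hb : (0:ℝ) ≤ p * Real.exp (-s) + (1 - p) := by
    nlinarith [Real.exp_pos (-s)]
  have hb2 : p * Real.exp (-s) + (1 - p) ≤ Real.exp (p * (Real.exp (-s) - 1)) := by
    have := Real.add_one_le_exp (p * (Real.exp (-s) - 1))
    linarith
  calc Real.exp (s*c) * (p * Real.exp (-s) + (1 - p)) ^ m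
      ≤ Real.exp (s*c) * Real.exp (p * (Real.exp (-s) - 1)) ^ m := by
        apply mul_le_mul_of_nonneg_left _ (Real.exp_pos _).le
        exact pow_le_pow_left₀ hb hb2 m
    _ = Real.exp (m * p * (Real.exp (-s) - 1) + s * c) := by
        rw [← Real.exp_nat_mul, ← Real.exp_add]
        ring_nf

lemma my_exp_le_quad {s : ℝ} (h0 : 0 ≤ s) (h1 : s ≤ 1) : Real.exp s ≤ 1 + s + s^2 := by
  have h := Real.exp_bound' h0 h1 (n := 2) (by norm_num)
  simp [Finset.sum_range_succ, Nat.factorial] at h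
  nlinarith [sq_nonneg s]

lemma my_exp_neg_le {s : ℝ} (h0 : 0 ≤ s) : Real.exp (-s) ≤ 1 - s + s^2/2 := by
  have hq := Real.quadratic_le_exp_of_nonneg h0
  have hpos : (0:ℝ) < 1 + s + s^2/2 := by nlinarith
  have h1 : Real.exp (-s) = 1 / Real.exp s := by
    rw [Real.exp_neg]; ring
  rw [h1]
  rw [div_le_iff₀ (Real.exp_pos s)]
  calc (1:ℝ) ≤ (1 - s + s^2/2) * (1 + s + s^2/2) := by nlinarith [sq_nonneg s, pow_le_pow_left₀ h0 (le_refl s)]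
    _ ≤ (1 - s + s^2/2) * Real.exp s := by
        apply mul_le_mul_of_nonneg_left hq
        nlinarith

set_option maxHeartbeats 1000000 in
/-- Fix `0 < x < 1/2` and `p ∈ (0,1]`, and set `t = ⌊xn⌋`.  For independent
`X ~ Bin(t,p)` and `Y ~ Bin(n−t−1,p)`, for all sufficiently large `n`:
`P(X ≥ Y) ≤ exp(−(1/2)((n/2−t)²/n)p) + exp(−(1/3)((n/2−t)²/n)p)`. -/
theorem stmt_13 (x p : ℝ) (hx0 : 0 < x) (hx : x < 1 / 2)
    (hp0 : 0 < p) (hp1 : p ≤ 1) :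
    ∃ N : ℕ, ∀ n : ℕ, N ≤ n →
      (∑ a ∈ Finset.range (⌊x * n⌋₊ + 1),
          ∑ b ∈ Finset.range (n - ⌊x * n⌋₊ - 1 + 1),
          (if b ≤ a then
            binPMF ⌊x * n⌋₊ a p * binPMF (n - ⌊x * n⌋₊ - 1) b p else 0)) ≤
        Real.exp (-(1 / 2) * (((n : ℝ) / 2 - ⌊x * n⌋₊) ^ 2 / n) * p) +
          Real.exp (-(1 / 3) * (((n : ℝ) / 2 - ⌊x * n⌋₊) ^ 2 / n) * p) := by

  obtain ⟨M, hM⟩ := exists_nat_ge (6 / (1/2 - x))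
  refine ⟨max 2 M, fun n hn => ?_⟩
  have h2n : (2:ℕ) ≤ n := le_trans (le_max_left _ _) hn
  have hMn : (M:ℝ) ≤ n := Nat.cast_le.mpr (le_trans (le_max_right _ _) hn)
  have hhx : (0:ℝ) < 1/2 - x := by linarith
  have hn6 : 6 ≤ (1/2 - x) * n := by
    have h : 6 / (1/2 - x) ≤ (n:ℝ) := le_trans hM hMn
    rw [div_le_iff₀ hhx] at h
    linarith
  set t : ℕ := ⌊x * n⌋₊ with ht_def
  have hnr : (0:ℝ) < n := by
    have : (0:ℕ) < n := by omega
    exact_mod_cast this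
  have htx : (t:ℝ) ≤ x * n := Nat.floor_le (by positivity)
  set d : ℝ := (n:ℝ)/2 - t with hd_def
  have hd6 : 6 ≤ d := by rw [hd_def]; nlinarith
  have hd0 : 0 < d := by linarith
  have hdn : d ≤ (n:ℝ)/2 := by
    have : (0:ℝ) ≤ t := Nat.cast_nonneg t
    rw [hd_def]; linarith
  set s : ℝ := d / n with hs_def
  have hs0 : 0 ≤ s := by rw [hs_def]; positivity
  have hs1 : s ≤ 1 := by
    have h0t : (0:ℝ) ≤ (t:ℝ) := Nat.cast_nonneg t
    have hn2 : (n:ℝ)/2 ≤ (n:ℝ) := by linarith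
    have hdn' : d ≤ (n:ℝ) := le_trans hdn hn2
    rw [hs_def]
    exact div_le_one_of_le₀ hdn' hnr.le
  set c : ℝ := (n:ℝ) * p / 2 with hc_def
  have htn : t + 1 ≤ n := by
    have h1 : (t:ℝ) + 1 ≤ (n:ℝ) := by nlinarith
    exact_mod_cast h1
  set m : ℕ := n - t - 1 with hm_def
  have hm : (m:ℝ) = (n:ℝ) - t - 1 := by
    rw [hm_def, Nat.sub_sub, Nat.cast_sub htn]
    push_cast; ring
  -- split step
  have hAnn : ∀ a : ℕ, 0 ≤ (if c ≤ (a:ℝ) then binPMF t a p else 0) := by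
    intro a; split_ifs
    · exact binPMF_nonneg hp0.le hp1
    · exact le_rfl
  have hBnn : ∀ b : ℕ, 0 ≤ (if (b:ℝ) ≤ c then binPMF m b p else 0) := by
    intro b; split_ifs
    · exact binPMF_nonneg hp0.le hp1
    · exact le_rfl
  have key1 : ∀ a b : ℕ, (if b ≤ a then binPMF t a p * binPMF m b p else 0) ≤
      (if c ≤ (a:ℝ) then binPMF t a p else 0) * binPMF m b p +
        binPMF t a p * (if (b:ℝ) ≤ c then binPMF m b p else 0) := by
    intro a b
    have hA : 0 ≤ binPMF t a p := binPMF_nonneg hp0.le hp1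
    have hB : 0 ≤ binPMF m b p := binPMF_nonneg hp0.le hp1
    by_cases hba : b ≤ a
    · rw [if_pos hba]
      by_cases hca : c ≤ (a:ℝ)
      · rw [if_pos hca]
        have := mul_nonneg hA (hBnn b)
        linarith
      · have hbc : (b:ℝ) ≤ c := by
          have : (b:ℝ) ≤ (a:ℝ) := Nat.cast_le.mpr hba
          linarith
        rw [if_neg hca, if_pos hbc]
        have := mul_nonneg (hAnn a) hB
        linarith
    · rw [if_neg hba]
      have h1 := mul_nonneg (hAnn a) hB
      have h2 := mul_nonneg hA (hBnn b)
      linarith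
  have hsplit : (∑ a ∈ Finset.range (t + 1), ∑ b ∈ Finset.range (m + 1),
        (if b ≤ a then binPMF t a p * binPMF m b p else 0)) ≤
      (∑ a ∈ Finset.range (t+1), (if c ≤ (a:ℝ) then binPMF t a p else 0)) +
      (∑ b ∈ Finset.range (m+1), (if (b:ℝ) ≤ c then binPMF m b p else 0)) := by
    calc (∑ a ∈ Finset.range (t + 1), ∑ b ∈ Finset.range (m + 1),
          (if b ≤ a then binPMF t a p * binPMF m b p else 0))
        ≤ ∑ a ∈ Finset.range (t + 1), ∑ b ∈ Finset.range (m + 1),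
          ((if c ≤ (a:ℝ) then binPMF t a p else 0) * binPMF m b p +
            binPMF t a p * (if (b:ℝ) ≤ c then binPMF m b p else 0)) := by
          apply Finset.sum_le_sum; intro a _
          apply Finset.sum_le_sum; intro b _
          exact key1 a b
      _ = (∑ a ∈ Finset.range (t+1), (if c ≤ (a:ℝ) then binPMF t a p else 0)) *
            (∑ b ∈ Finset.range (m+1), binPMF m b p) +
          (∑ a ∈ Finset.range (t+1), binPMF t a p) *
            (∑ b ∈ Finset.range (m+1), (if (b:ℝ) ≤ c then binPMF m b p else 0)) := by
          rw [Finset.sum_mul_sum, Finset.sum_mul_sum, ← Finset.sum_add_distrib]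
          apply Finset.sum_congr rfl; intro a _
          rw [← Finset.sum_add_distrib]
      _ = (∑ a ∈ Finset.range (t+1), (if c ≤ (a:ℝ) then binPMF t a p else 0)) +
          (∑ b ∈ Finset.range (m+1), (if (b:ℝ) ≤ c then binPMF m b p else 0)) := by
          rw [binPMF_sum, binPMF_sum, mul_one, one_mul]
  -- Chernoff bounds
  have hcu := chernoff_upper t p s c hp0.le hp1 hs0
  have hcl := chernoff_lower m p s c hp0.le hp1 hs0
  -- arithmetic : upper exponent
  have ineq1 : (t:ℝ) * p * (Real.exp s - 1) - s * c ≤ -(1/2) * (d^2/(n:ℝ)) * p := by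
    have he : Real.exp s ≤ 1 + s + s^2 := my_exp_le_quad hs0 hs1
    have htp : (0:ℝ) ≤ (t:ℝ) * p := mul_nonneg (Nat.cast_nonneg t) hp0.le
    have step : (t:ℝ) * p * (Real.exp s - 1) ≤ (t:ℝ) * p * (s + s^2) := by nlinarith
    have expand : (t:ℝ) * p * (s + s^2) - s * c + (1/2) * (d^2/(n:ℝ)) * p
        = -(p * d^3) / (n:ℝ)^2 := by
      rw [hs_def, hc_def, hd_def]
      field_simp
      ring
    have hnn : -(p * d^3) / (n:ℝ)^2 ≤ 0 := by
      apply div_nonpos_of_nonpos_of_nonneg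
      · have : 0 < p * d^3 := by positivity
        linarith
      · positivity
    linarith
  -- arithmetic : lower exponent
  have ineq2 : (m:ℝ) * p * (Real.exp (-s) - 1) + s * c ≤ -(1/3) * (d^2/(n:ℝ)) * p := by
    have he : Real.exp (-s) ≤ 1 - s + s^2/2 := my_exp_neg_le hs0
    have hmp : (0:ℝ) ≤ (m:ℝ) * p := mul_nonneg (Nat.cast_nonneg m) hp0.le
    have step : (m:ℝ) * p * (Real.exp (-s) - 1) ≤ (m:ℝ) * p * (-s + s^2/2) := by nlinarith
    have key : d * n - (5/12) * d^2 * n + d^3/2 - d^2/2 ≤ 0 := by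
      have h1 : d^3 ≤ d^2 * ((n:ℝ)/2) := by nlinarith [sq_nonneg d]
      have h2 : 6 * d ≤ d^2 := by nlinarith
      nlinarith [mul_le_mul_of_nonneg_right h2 hnr.le]
    have expand : (m:ℝ) * p * (-s + s^2/2) + s * c + (1/3) * (d^2/(n:ℝ)) * p
        = p * ((d * n - (5/12) * d^2 * n + d^3/2 - d^2/2) / (n:ℝ)^2) := by
      rw [hm, hs_def, hc_def, hd_def]
      field_simp
      ring
    have hnn : p * ((d * n - (5/12) * d^2 * n + d^3/2 - d^2/2) / (n:ℝ)^2) ≤ 0 := by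
      apply mul_nonpos_of_nonneg_of_nonpos hp0.le
      apply div_nonpos_of_nonpos_of_nonneg key (by positivity)
    linarith
  -- finish
  have hA' : (∑ a ∈ Finset.range (t+1), (if c ≤ (a:ℝ) then binPMF t a p else 0))
      ≤ Real.exp (-(1/2) * (d^2/(n:ℝ)) * p) :=
    hcu.trans (Real.exp_le_exp.mpr ineq1)
  have hB' : (∑ b ∈ Finset.range (m+1), (if (b:ℝ) ≤ c then binPMF m b p else 0))
      ≤ Real.exp (-(1/3) * (d^2/(n:ℝ)) * p) :=
    hcl.trans (Real.exp_le_exp.mpr ineq2)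
  have : ((n:ℝ)/2 - (t:ℝ))^2 = d^2 := by rw [hd_def]
  rw [this]
  exact hsplit.trans (add_le_add hA' hB')
end

section
/- For p = c/n with c > 0 fixed and 0 < θ < 1, define f_{c,θ}(x) = θ − x + (1−θ)·e^{p}·e^{−c}·Σ_{k=1}^{⌊xn⌋} ((cx)^k/k!)·Σ_{j=0}^{k} ((1−x)c)^j/j!. Then for every ε with 0 < ε < e^{−c} there exists N such that for all n ≥ N, f_{c,θ}(1) ≤ (1−θ)·(ε − (1+ε)e^{−c}) < 0. -/
/-- The function `f_{c,θ}(x)` (with `p = c/n`) approximating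
`(E[A(xn)] − xn)/n` in majority bootstrap percolation on `G(n, c/n)`. -/
noncomputable def fA (n : ℕ) (c θ x : ℝ) : ℝ :=
  θ - x + (1 - θ) * Real.exp (c / n) * Real.exp (-c) *
    ∑ k ∈ Finset.Icc 1 ⌊x * n⌋₊,
      (c * x) ^ k / (k.factorial : ℝ) *
        ∑ j ∈ Finset.range (k + 1), ((1 - x) * c) ^ j / (j.factorial : ℝ)

lemma inner_one (k : ℕ) :
    ∑ j ∈ Finset.range (k + 1), (0:ℝ) ^ j / (j.factorial : ℝ) = 1 := by
  rw [Finset.sum_eq_single 0]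
  · simp
  · intro j _ hj
    simp [sub_self, zero_pow hj]
  · simp

lemma fA_one (n : ℕ) (c θ : ℝ) :
    fA n c θ 1 = θ - 1 + (1 - θ) * Real.exp (c / n) * Real.exp (-c) *
      ∑ k ∈ Finset.Icc 1 n, c ^ k / (k.factorial : ℝ) := by
  unfold fA
  simp [inner_one]

lemma sum_bound (c : ℝ) (hc : 0 ≤ c) (n : ℕ) :
    ∑ k ∈ Finset.Icc 1 n, c ^ k / (k.factorial : ℝ) ≤ Real.exp c - 1 := by
  have h1 : ∑ k ∈ Finset.range (n + 1), c ^ k / (k.factorial : ℝ) ≤ Real.exp c :=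
    Real.sum_le_exp_of_nonneg hc _
  have h2 : Finset.range (n + 1) = insert 0 (Finset.Icc 1 n) := by
    ext x; simp; omega
  rw [h2, Finset.sum_insert (by simp)] at h1
  simp at h1
  linarith

/-- For every `0 < ε < e^{−c}` there exists `N` such that for all `n ≥ N`,
`f_{c,θ}(1) ≤ (1−θ)(ε − (1+ε)e^{−c}) < 0`. -/
theorem stmt_15 (c θ ε : ℝ) (hc : 0 < c) (hθ0 : 0 < θ) (hθ1 : θ < 1)
    (hε0 : 0 < ε) (hε : ε < Real.exp (-c)) :
    ∃ N : ℕ, ∀ n : ℕ, N ≤ n →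
      fA n c θ 1 ≤ (1 - θ) * (ε - (1 + ε) * Real.exp (-c)) ∧
      (1 - θ) * (ε - (1 + ε) * Real.exp (-c)) < 0 := by
  have hE : 0 < Real.exp (-c) := Real.exp_pos _
  have hneg : (1 - θ) * (ε - (1 + ε) * Real.exp (-c)) < 0 := by
    apply mul_neg_of_pos_of_neg (by linarith)
    nlinarith
  have hlog : 0 < Real.log (1 + ε) := Real.log_pos (by linarith)
  refine ⟨⌈c / Real.log (1 + ε)⌉₊ + 1, fun n hn => ⟨?_, hneg⟩⟩
  have hn0 : 0 < n := lt_of_lt_of_le (Nat.succ_pos _) hn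
  have hnc : c / Real.log (1 + ε) ≤ (n : ℝ) := by
    refine le_trans (Nat.le_ceil _) ?_
    exact_mod_cast le_trans (Nat.le_succ _) hn
  have hcn : c / n ≤ Real.log (1 + ε) := by
    rw [div_le_iff₀ (by exact_mod_cast hn0)]
    rw [div_le_iff₀ hlog] at hnc
    linarith [hnc]
  have hexp : Real.exp (c / n) ≤ 1 + ε := by
    rw [← Real.exp_log (show (0:ℝ) < 1 + ε by linarith)]
    exact Real.exp_le_exp.mpr hcn
  have hS0 : 0 ≤ ∑ k ∈ Finset.Icc 1 n, c ^ k / (k.factorial : ℝ) := by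
    apply Finset.sum_nonneg
    intro k _
    positivity
  have hS : ∑ k ∈ Finset.Icc 1 n, c ^ k / (k.factorial : ℝ) ≤ Real.exp c - 1 :=
    sum_bound c hc.le n
  rw [fA_one]
  have key : (1 - θ) * Real.exp (c / n) * Real.exp (-c) *
      (∑ k ∈ Finset.Icc 1 n, c ^ k / (k.factorial : ℝ)) ≤
      (1 - θ) * (1 + ε) * (Real.exp (-c) * (Real.exp c - 1)) := by
    have h1θ : (0:ℝ) ≤ 1 - θ := by linarith
    calc (1 - θ) * Real.exp (c / n) * Real.exp (-c) *
        (∑ k ∈ Finset.Icc 1 n, c ^ k / (k.factorial : ℝ))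
        = ((1 - θ) * Real.exp (-c)) *
          (Real.exp (c / n) * ∑ k ∈ Finset.Icc 1 n, c ^ k / (k.factorial : ℝ)) := by ring
      _ ≤ ((1 - θ) * Real.exp (-c)) * ((1 + ε) * (Real.exp c - 1)) := by
          apply mul_le_mul_of_nonneg_left _ (mul_nonneg h1θ (Real.exp_pos _).le)
          exact mul_le_mul hexp hS hS0 (by linarith)
      _ = (1 - θ) * (1 + ε) * (Real.exp (-c) * (Real.exp c - 1)) := by ring
  have hmul : Real.exp (-c) * Real.exp c = 1 := by
    rw [← Real.exp_add]; simp
  have h1 : Real.exp (-c) * (Real.exp c - 1) = 1 - Real.exp (-c) := by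
    rw [mul_sub, hmul]; ring
  rw [h1] at key
  nlinarith [key]
end
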